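/- Under the interference-alignment hypotheses, k(r−1) + 1 ≤ l²; equivalently, k ≤ (l² − 1)/(r − 1). -/

import Mathlib

/-!
The `k (r - 1) + 1` matrices `I` and `C u j` (`u ≠ 1`) are linearly independent in the
`l²`-dimensional space of `l × l` matrices. Multiply a linear relation among them on the left
by `S j`. The rows of `S j * C u j` lie in the `u`-th summand of the direct sum
`⨁ᵤ rowSpace (S j * C u j)`, while by alignment the rows of `S j * I` and of every
`S j * C u i` with `i ≠ j` lie in `rowSpace (S j) = rowSpace (S j * C 1 j)`. Independence of the
summands kills the coefficient of each `C u j`, and then the coefficient of `I` vanishes too.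
-/

open Submodule

section

variable {𝔽 : Type*} [Field 𝔽] {m n : Type*}

theorem coeff_eq_zero_of_disjoint_span_range {ι : Type*} [Fintype ι]
    (A : ι → Matrix m n 𝔽) (g : ι → 𝔽) (hg : ∑ x, g x • A x = 0) (x₀ : ι) (hA : A x₀ ≠ 0)
    (W : Submodule 𝔽 (n → 𝔽)) (hW : ∀ x ≠ x₀, span 𝔽 (Set.range (A x)) ≤ W)
    (hdisj : Disjoint (span 𝔽 (Set.range (A x₀))) W) :
    g x₀ = 0 := by
  classical
  have hrow : ∀ i, g x₀ • A x₀ i = 0 := by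
    intro i
    have hsum : g x₀ • A x₀ i = -∑ x ∈ Finset.univ.erase x₀, g x • A x i := by
      rw [eq_neg_iff_add_eq_zero,
        Finset.add_sum_erase _ (fun x => (g x • A x i : n → 𝔽)) (Finset.mem_univ x₀)]
      ext j
      simpa [Matrix.sum_apply] using congr_fun₂ hg i j
    refine disjoint_def.mp hdisj _ (smul_mem _ _ (subset_span ⟨i, rfl⟩)) ?_
    rw [hsum]
    exact neg_mem <| sum_mem fun x hx =>
      smul_mem _ _ (hW x (Finset.ne_of_mem_erase hx) (subset_span ⟨i, rfl⟩))
  exact (smul_eq_zero.mp (funext hrow)).resolve_right hA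

theorem ne_zero_of_iSup_span_range_mul_eq_top [Fintype n] [Nonempty n] [DecidableEq n]
    {r : Type*} {S : Matrix m n 𝔽} {C : r → Matrix n n 𝔽}
    (h : ⨆ u, span 𝔽 (Set.range (S * C u)) = ⊤) :
    S ≠ 0 := by
  rintro rfl
  have hbot : ∀ u, span 𝔽 (Set.range ((0 : Matrix m n 𝔽) * C u)) = ⊥ := fun u => by
    rw [Matrix.zero_mul, span_eq_bot]
    rintro _ ⟨_, rfl⟩
    rfl
  simp only [hbot, iSup_bot] at h
  exact bot_ne_top h

/-- The paper's `u = 1, …, r` is `0, …, s` here, so `v.succ` runs over the indices `u ≠ 1`. -/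
def encodingFamily [Fintype n] [DecidableEq n] {ι : Type*} {s : ℕ}
    (C : Fin (s + 1) → ι → Matrix n n 𝔽) : Option (ι × Fin s) → Matrix n n 𝔽
  | none => 1
  | some (j, v) => C v.succ j

theorem linearIndependent_encodingFamily [Fintype n] [Nonempty n] [DecidableEq n]
    {ι : Type*} [Fintype ι] {s : ℕ} (S : ι → Matrix m n 𝔽) (C : Fin (s + 1) → ι → Matrix n n 𝔽)
    (hC1 : ∀ j, C 0 j = 1)
    (hIA1 : ∀ i j, j ≠ i → ∀ u,
      span 𝔽 (Set.range (S i * C u j)) = span 𝔽 (Set.range (S i)))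
    (hIA2 : ∀ i, iSupIndep fun u => span 𝔽 (Set.range (S i * C u i)))
    (hSC : ∀ u i, S i * C u i ≠ 0) :
    LinearIndependent 𝔽 (encodingFamily C) := by
  classical
  rw [Fintype.linearIndependent_iff]
  intro g hg
  have hsome : ∀ j v, g (some (j, v)) = 0 := by
    intro j v
    set W := ⨆ u, ⨆ (_ : u ≠ v.succ), span 𝔽 (Set.range (S j * C u j))
    have hW0 : span 𝔽 (Set.range (S j)) ≤ W := by
      refine le_of_eq_of_le ?_ (le_iSup₂ (f := fun u (_ : u ≠ v.succ) =>
        span 𝔽 (Set.range (S j * C u j))) 0 (Fin.succ_ne_zero v).symm)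
      rw [hC1, Matrix.mul_one]
    refine coeff_eq_zero_of_disjoint_span_range (fun o => S j * encodingFamily C o)
      g ?_ (some (j, v)) (hSC v.succ j) W ?_ (hIA2 j v.succ)
    · simp_rw [← Matrix.mul_smul, ← Matrix.mul_sum, hg, Matrix.mul_zero]
    · rintro (_ | ⟨i, w⟩) ho
      · simpa [encodingFamily] using hW0
      · by_cases hij : i = j
        · subst hij
          have hw : w.succ ≠ v.succ := fun h => ho (by rw [Fin.succ_injective _ h])
          exact le_iSup₂ (f := fun u (_ : u ≠ v.succ) => span 𝔽 (Set.range (S i * C u i)))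
            w.succ hw
        · simpa [encodingFamily, hIA1 j i hij] using hW0
  have hnone : g none = 0 := by
    simp only [Fintype.sum_option, hsome, zero_smul, Finset.sum_const_zero, add_zero,
      encodingFamily] at hg
    exact (smul_eq_zero.mp hg).resolve_right one_ne_zero
  rintro (_ | ⟨j, v⟩)
  exacts [hnone, hsome j v]

theorem card_mul_add_one_le_card_sq [Fintype n] [Nonempty n] [DecidableEq n]
    {ι : Type*} [Fintype ι] {s : ℕ} (S : ι → Matrix m n 𝔽) (C : Fin (s + 1) → ι → Matrix n n 𝔽)
    (hCinv : ∀ u j, IsUnit (C u j)) (hC1 : ∀ j, C 0 j = 1)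
    (hIA1 : ∀ i j, j ≠ i → ∀ u,
      span 𝔽 (Set.range (S i * C u j)) = span 𝔽 (Set.range (S i)))
    (hIA2 : ∀ i, iSupIndep fun u => span 𝔽 (Set.range (S i * C u i)))
    (hIA3 : ∀ i, ⨆ u, span 𝔽 (Set.range (S i * C u i)) = ⊤) :
    Fintype.card ι * s + 1 ≤ Fintype.card n ^ 2 := by
  have hSC : ∀ u i, S i * C u i ≠ 0 := fun u i h => by
    let := (hCinv u i).invertible
    exact ne_zero_of_iSup_span_range_mul_eq_top (hIA3 i)
      (Matrix.mul_left_injective_of_invertible (C u i) (by simpa using h))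
  have := (linearIndependent_encodingFamily S C hC1 hIA1 hIA2 hSC).fintype_card_le_finrank
  simpa [Module.finrank_matrix, sq] using this

end

theorem stmt_4 {𝔽 : Type*} [Field 𝔽] (k r l : ℕ)
    (hr : 2 ≤ r) (hl : 0 < l)
    (S : Fin k → Matrix (Fin (l / r)) (Fin l) 𝔽)
    (C : Fin r → Fin k → Matrix (Fin l) (Fin l) 𝔽)
    (hCinv : ∀ u j, IsUnit (C u j))
    (hC1 : ∀ j, C ⟨0, by omega⟩ j = 1)
    (hIA1 : ∀ (i j : Fin k), j ≠ i → ∀ u : Fin r,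
      Submodule.span 𝔽 (Set.range (S i * C u j)) = Submodule.span 𝔽 (Set.range (S i)))
    (hIA2 : ∀ i : Fin k, iSupIndep
      fun u : Fin r => Submodule.span 𝔽 (Set.range (S i * C u i)))
    (hIA3 : ∀ i : Fin k,
      (⨆ u : Fin r, Submodule.span 𝔽 (Set.range (S i * C u i))) = ⊤)
    :
    k * (r - 1) + 1 ≤ l ^ 2 ∧ k ≤ (l ^ 2 - 1) / (r - 1) := by
  obtain ⟨s, rfl⟩ : ∃ s, r = s + 1 := ⟨r - 1, by omega⟩
  have : Nonempty (Fin l) := ⟨⟨0, hl⟩⟩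
  have key := card_mul_add_one_le_card_sq S C hCinv hC1 hIA1 hIA2 hIA3
  simp only [Fintype.card_fin, Nat.add_sub_cancel] at key ⊢
  exact ⟨key, (Nat.le_div_iff_mul_le (by omega)).mpr (by omega)⟩
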